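/- Let A be a set of at least 3 arguments and let F be a graph aggregation rule defined on justifiable profiles of argumentation frameworks on A that preserves being a defeat graph (with respect to VAFs with at least 3 values). Then F is not independent, is not unanimous, or is dictatorial. -/

import Mathlib

/-- An audience is a strict linear order on values: irreflexive, transitive and
complete (any two distinct values are comparable). -/
def IsAudience {V : Type} (P : V → V → Prop) : Prop :=
  (∀ v, ¬ P v v) ∧ (∀ u v w, P u v → P v w → P u w) ∧ (∀ v w, v ≠ w → P v w ∨ P w v)

/-- Given a VAF with attack relation `att` and value labelling `val`, and an audience `P`,
argument `a` defeats `b` iff `a` attacks `b` and `val b` is not preferred to `val a`.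
`defeats att val P` is the defeat graph induced by `P`. -/
def defeats {A V : Type} (att : A → A → Prop) (val : A → V) (P : V → V → Prop) :
    A → A → Prop :=
  fun a b => att a b ∧ ¬ P (val b) (val a)

/-- A profile of argumentation frameworks is justifiable if there is a single VAF
(an attack relation and a value labelling) such that every member of the profile is a
defeat graph of that VAF induced by some audience. -/
def JustifiableProfile {A : Type} {n : ℕ} (AF : Fin n → A → A → Prop) : Prop :=
  ∃ (V : Type) (att : A → A → Prop) (val : A → V),
    ∀ i, ∃ P : V → V → Prop, IsAudience P ∧ AF i = defeats att val P

/-!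
On the VAF in which arguments attack each other exactly when their values differ, the defeat
graphs are the audiences themselves, pulled back along the valuation. So a rule preserving defeat
graphs turns profiles of linear orders of three values into a linear order, and Arrow's argument
applies. A coalition `C` wins `u` over `v` if the rule lets `u` defeat `v` when exactly the members
of `C` do; by independence this does not depend on the rest of the profile. Transitivity of the
collective order on three-argument profiles gives field expansion and closure of the decisive
coalitions under intersection, and its completeness shows that exactly one of `C`, `Cᶜ` is
decisive. So the decisive coalitions form an ultrafilter on the finite set of agents; it is
principal, and its generator is a dictator. Self-attacks are settled separately: all agents of a
justifiable profile agree on them, and the rule maps a constant profile to its common graph.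
-/

section Audience

variable {V : Type} {P : V → V → Prop}

theorem IsAudience.irrefl (hP : IsAudience P) (v : V) : ¬ P v v := hP.1 v

theorem IsAudience.trans (hP : IsAudience P) {u v w : V} : P u v → P v w → P u w :=
  hP.2.1 u v w

theorem IsAudience.asymm (hP : IsAudience P) {u v : V} (h : P u v) : ¬ P v u :=
  fun h' => hP.irrefl u (hP.trans h h')

theorem IsAudience.not_swap_iff (hP : IsAudience P) {u v : V} (h : u ≠ v) : ¬ P v u ↔ P u v :=
  ⟨fun h' => (hP.2.2 u v h).resolve_right h', hP.asymm⟩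

end Audience

theorem JustifiableProfile.apply_self_iff {A : Type} {n : ℕ} {AF : Fin n → A → A → Prop}
    (hAF : JustifiableProfile AF) (i j : Fin n) (a : A) : AF i a a ↔ AF j a a := by
  obtain ⟨V, att, val, hAF⟩ := hAF
  have loop_iff (k : Fin n) : AF k a a ↔ att a a := by
    obtain ⟨P, hP, hk⟩ := hAF k
    simp only [hk, defeats, hP.irrefl, not_false_eq_true, and_true]
  rw [loop_iff, loop_iff]

namespace ValueBasedArgumentation

variable {A V : Type} {n : ℕ}

theorem exists_ne_ne_of_three {a₁ a₂ a₃ : A} (h₁₂ : a₁ ≠ a₂) (h₁₃ : a₁ ≠ a₃) (h₂₃ : a₂ ≠ a₃)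
    (p q : A) : ∃ r, r ≠ p ∧ r ≠ q := by
  classical
  have hcard : ({p, q} : Finset A).card < ({a₁, a₂, a₃} : Finset A).card := by
    rw [Finset.card_eq_three.mpr ⟨a₁, a₂, a₃, h₁₂, h₁₃, h₂₃, rfl⟩]
    exact Finset.card_le_two.trans_lt (by norm_num)
  obtain ⟨r, -, hr⟩ := Finset.exists_mem_notMem_of_card_lt_card hcard
  exact ⟨r, by simpa [not_or] using hr⟩

def valueAtt (val : A → V) : A → A → Prop := fun a b => val a ≠ val b

theorem defeats_valueAtt_iff {val : A → V} {P : V → V → Prop} (hP : IsAudience P) (a b : A) :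
    defeats (valueAtt val) val P a b ↔ P (val a) (val b) :=
  ⟨fun h => (hP.not_swap_iff h.1).1 h.2, fun h => ⟨fun he => hP.irrefl _ (he ▸ h), hP.asymm h⟩⟩

def audienceProfile (val : A → V) (R : Fin n → V → V → Prop) : Fin n → A → A → Prop :=
  fun i => defeats (valueAtt val) val (R i)

theorem justifiableProfile_audienceProfile {val : A → V} {R : Fin n → V → V → Prop}
    (hR : ∀ i, IsAudience (R i)) : JustifiableProfile (audienceProfile val R) :=
  ⟨V, valueAtt val, val, fun i => ⟨R i, hR i, rfl⟩⟩

def tournament (p₀₁ p₁₂ p₀₂ : Prop) : Fin 3 → Fin 3 → Prop :=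
  ![![False, p₀₁, p₀₂], ![¬ p₀₁, False, p₁₂], ![¬ p₀₂, ¬ p₁₂, False]]

theorem isAudience_tournament {p₀₁ p₁₂ p₀₂ : Prop} (h : p₀₁ → p₁₂ → p₀₂)
    (h' : p₀₂ → p₀₁ ∨ p₁₂) : IsAudience (tournament p₀₁ p₁₂ p₀₂) := by
  refine ⟨fun u => ?_, fun u v w => ?_, fun u v => ?_⟩ <;>
    fin_cases u <;> (try fin_cases v) <;> (try fin_cases w) <;> simp [tournament] <;> tauto

open Classical in
noncomputable def rankVal (p q : A) : A → Fin 3 :=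
  fun a => if a = p then 0 else if a = q then 1 else 2

theorem rankVal_left (p q : A) : rankVal p q p = 0 := if_pos rfl

theorem rankVal_right {p q : A} (hpq : p ≠ q) : rankVal p q q = 1 := by
  simp [rankVal, hpq.symm]

theorem rankVal_of_ne {p q r : A} (hrp : r ≠ p) (hrq : r ≠ q) : rankVal p q r = 2 := by
  simp [rankVal, hrp, hrq]

noncomputable def tournamentProfile (p q : A) (C₁ C₂ C₃ : Set (Fin n)) : Fin n → A → A → Prop :=
  audienceProfile (rankVal p q) fun i => tournament (i ∈ C₁) (i ∈ C₂) (i ∈ C₃)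

section Realizable

variable {C₁ C₂ C₃ : Set (Fin n)}

-- The two inclusions say that no agent ranks `p`, `q`, `r` cyclically.
theorem isAudience_tournament_mem (h₃ : C₁ ∩ C₂ ⊆ C₃) (h₃' : C₃ ⊆ C₁ ∪ C₂) :
    ∀ i : Fin n, IsAudience (tournament (i ∈ C₁) (i ∈ C₂) (i ∈ C₃)) := fun _ =>
  isAudience_tournament (fun h₁ h₂ => h₃ ⟨h₁, h₂⟩) (fun h => h₃' h)

theorem justifiableProfile_tournamentProfile (h₃ : C₁ ∩ C₂ ⊆ C₃) (h₃' : C₃ ⊆ C₁ ∪ C₂) (p q : A) :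
    JustifiableProfile (tournamentProfile p q C₁ C₂ C₃) :=
  justifiableProfile_audienceProfile (isAudience_tournament_mem h₃ h₃')

variable {p q r : A}

theorem tournamentProfile_apply_pq (hpq : p ≠ q) (i : Fin n) :
    tournamentProfile p q C₁ C₂ C₃ i p q ↔ i ∈ C₁ := by
  simp [tournamentProfile, audienceProfile, defeats, valueAtt, rankVal_left, rankVal_right hpq,
    tournament]

theorem tournamentProfile_apply_qp (hpq : p ≠ q) (i : Fin n) :
    tournamentProfile p q C₁ C₂ C₃ i q p ↔ i ∉ C₁ := by
  simp [tournamentProfile, audienceProfile, defeats, valueAtt, rankVal_left, rankVal_right hpq,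
    tournament]

theorem tournamentProfile_apply_qr (hpq : p ≠ q) (hrp : r ≠ p) (hrq : r ≠ q) (i : Fin n) :
    tournamentProfile p q C₁ C₂ C₃ i q r ↔ i ∈ C₂ := by
  simp [tournamentProfile, audienceProfile, defeats, valueAtt, rankVal_right hpq,
    rankVal_of_ne hrp hrq, tournament]

theorem tournamentProfile_apply_pr (hrp : r ≠ p) (hrq : r ≠ q) (i : Fin n) :
    tournamentProfile p q C₁ C₂ C₃ i p r ↔ i ∈ C₃ := by
  simp [tournamentProfile, audienceProfile, defeats, valueAtt, rankVal_left,
    rankVal_of_ne hrp hrq, tournament]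

end Realizable

theorem isAudience_lt [LinearOrder V] : IsAudience (fun u v : V => u < v) :=
  ⟨lt_irrefl, fun _ _ _ => lt_trans, fun _ _ => lt_or_gt_of_ne⟩

theorem defeats_const {att : A → A → Prop} {P : V → V → Prop} (hP : IsAudience P) (v : V) :
    defeats att (fun _ => v) P = att := by
  funext a b
  simp [defeats, hP.irrefl]

theorem justifiableProfile_const (G : A → A → Prop) : JustifiableProfile (fun _ : Fin n => G) :=
  ⟨Fin 3, G, fun _ => 0, fun _ => ⟨_, isAudience_lt, (defeats_const isAudience_lt 0).symm⟩⟩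

section Rule

variable (F : (Fin n → A → A → Prop) → (A → A → Prop))

def PreservesDefeatGraphs : Prop :=
  ∀ (V : Type) (v₁ v₂ v₃ : V), v₁ ≠ v₂ → v₁ ≠ v₃ → v₂ ≠ v₃ →
    ∀ (att : A → A → Prop) (val : A → V) (AF : Fin n → A → A → Prop),
      (∀ i, ∃ P : V → V → Prop, IsAudience P ∧ AF i = defeats att val P) →
      ∃ P : V → V → Prop, IsAudience P ∧ F AF = defeats att val P

def IsIndependent : Prop :=
  ∀ (AF AF' : Fin n → A → A → Prop),
    JustifiableProfile AF → JustifiableProfile AF' →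
    ∀ a b, {i : Fin n | AF i a b} = {i : Fin n | AF' i a b} → (F AF a b ↔ F AF' a b)

def IsUnanimous : Prop :=
  ∀ AF : Fin n → A → A → Prop, JustifiableProfile AF → ∀ a b, (∀ i, AF i a b) → F AF a b

def IsDictatorial : Prop :=
  ∃ i : Fin n, ∀ AF : Fin n → A → A → Prop, JustifiableProfile AF → F AF = AF i

/-- The rule lets `u` defeat `v` on a profile in which exactly the members of `C` let `u` defeat `v`
(and the others let `v` defeat `u`); by independence the rest of the profile is immaterial. -/
def Win (u v : A) (C : Set (Fin n)) : Prop :=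
  F (tournamentProfile u v C Set.univ Set.univ) u v

def IsDecisive (C : Set (Fin n)) : Prop := ∀ u v : A, u ≠ v → Win F u v C

variable {F}

theorem PreservesDefeatGraphs.exists_audience (hF : PreservesDefeatGraphs F) {val : A → Fin 3}
    {R : Fin n → Fin 3 → Fin 3 → Prop} (hR : ∀ i, IsAudience (R i)) :
    ∃ Q, IsAudience Q ∧ ∀ a b, F (audienceProfile val R) a b ↔ Q (val a) (val b) := by
  obtain ⟨Q, hQ, hFQ⟩ := hF (Fin 3) 0 1 2 (by decide) (by decide) (by decide) (valueAtt val) val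
    (audienceProfile val R) fun i => ⟨R i, hR i, rfl⟩
  exact ⟨Q, hQ, fun a b => by rw [hFQ]; exact defeats_valueAtt_iff hQ a b⟩

theorem PreservesDefeatGraphs.apply_const (hF : PreservesDefeatGraphs F) (G : A → A → Prop) :
    F (fun _ => G) = G := by
  obtain ⟨Q, hQ, hFQ⟩ := hF (Fin 3) 0 1 2 (by decide) (by decide) (by decide) G (fun _ => 0)
    (fun _ => G) fun _ => ⟨_, isAudience_lt, (defeats_const isAudience_lt 0).symm⟩
  rw [hFQ, defeats_const hQ]

theorem IsIndependent.apply_iff_win (hI : IsIndependent F) {AF : Fin n → A → A → Prop}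
    (hAF : JustifiableProfile AF) {u v : A} (huv : u ≠ v) :
    F AF u v ↔ Win F u v {i | AF i u v} :=
  hI _ _ hAF (justifiableProfile_tournamentProfile (Set.subset_univ _) Set.subset_union_right u v)
    u v (Set.ext fun i => (tournamentProfile_apply_pq huv i).symm)

theorem IsUnanimous.win_univ (hU : IsUnanimous F) {u v : A} (huv : u ≠ v) :
    Win F u v Set.univ :=
  hU _ (justifiableProfile_tournamentProfile (Set.subset_univ _) Set.subset_union_right u v) u v
    fun i => (tournamentProfile_apply_pq huv i).2 trivial

theorem not_win_iff (hF : PreservesDefeatGraphs F) (hI : IsIndependent F) {u v : A}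
    (huv : u ≠ v) (C : Set (Fin n)) : ¬ Win F u v C ↔ Win F v u Cᶜ := by
  have h₃ : C ∩ Set.univ ⊆ Set.univ := Set.subset_univ _
  have h₃' : Set.univ ⊆ C ∪ Set.univ := Set.subset_union_right
  have hJ := justifiableProfile_tournamentProfile h₃ h₃' u v
  obtain ⟨Q, hQ, hFQ⟩ := hF.exists_audience (isAudience_tournament_mem h₃ h₃')
  have hvu : {i | tournamentProfile u v C Set.univ Set.univ i v u} = Cᶜ :=
    Set.ext fun i => tournamentProfile_apply_qp (C₂ := Set.univ) (C₃ := Set.univ) huv i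
  rw [← hvu, ← hI.apply_iff_win hJ huv.symm, Win, tournamentProfile, hFQ, hFQ, rankVal_left,
    rankVal_right huv]
  exact hQ.not_swap_iff (by decide)

theorem win_trans (hF : PreservesDefeatGraphs F) (hI : IsIndependent F) {p q r : A}
    (hpq : p ≠ q) (hrp : r ≠ p) (hrq : r ≠ q) {C₁ C₂ C₃ : Set (Fin n)}
    (h₃ : C₁ ∩ C₂ ⊆ C₃) (h₃' : C₃ ⊆ C₁ ∪ C₂) (hwin₁ : Win F p q C₁) (hwin₂ : Win F q r C₂) :
    Win F p r C₃ := by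
  have hJ := justifiableProfile_tournamentProfile h₃ h₃' p q
  obtain ⟨Q, hQ, hFQ⟩ := hF.exists_audience (isAudience_tournament_mem h₃ h₃')
  have set_pq : {i | tournamentProfile p q C₁ C₂ C₃ i p q} = C₁ :=
    Set.ext fun i => tournamentProfile_apply_pq hpq i
  have set_qr : {i | tournamentProfile p q C₁ C₂ C₃ i q r} = C₂ :=
    Set.ext fun i => tournamentProfile_apply_qr hpq hrp hrq i
  have set_pr : {i | tournamentProfile p q C₁ C₂ C₃ i p r} = C₃ :=
    Set.ext fun i => tournamentProfile_apply_pr hrp hrq i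
  rw [← set_pq, ← hI.apply_iff_win hJ hpq, tournamentProfile, hFQ] at hwin₁
  rw [← set_qr, ← hI.apply_iff_win hJ hrq.symm, tournamentProfile, hFQ] at hwin₂
  rw [← set_pr, ← hI.apply_iff_win hJ hrp.symm, tournamentProfile, hFQ]
  exact hQ.trans hwin₁ hwin₂

variable {p q r : A} {C C' : Set (Fin n)}

theorem win_right_of_subset (hF : PreservesDefeatGraphs F) (hI : IsIndependent F)
    (hU : IsUnanimous F) (hpq : p ≠ q) (hrp : r ≠ p) (hrq : r ≠ q) (h : Win F p q C)
    (hCC' : C ⊆ C') : Win F p r C' :=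
  win_trans hF hI hpq hrp hrq (by rwa [Set.inter_univ]) (by simp) h (hU.win_univ hrq.symm)

theorem win_left_of_subset (hF : PreservesDefeatGraphs F) (hI : IsIndependent F)
    (hU : IsUnanimous F) (hpq : p ≠ q) (hrp : r ≠ p) (hrq : r ≠ q) (h : Win F p q C)
    (hCC' : C ⊆ C') : Win F r q C' :=
  win_trans hF hI hrp hrq.symm hpq.symm (by rwa [Set.univ_inter]) (by simp)
    (hU.win_univ hrp) h

theorem win_right (hF : PreservesDefeatGraphs F) (hI : IsIndependent F) (hU : IsUnanimous F)
    (hpq : p ≠ q) (h : Win F p q C) (hrp : r ≠ p) : Win F p r C := by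
  rcases eq_or_ne r q with rfl | hrq
  · exact h
  · exact win_right_of_subset hF hI hU hpq hrp hrq h subset_rfl

theorem win_left (hF : PreservesDefeatGraphs F) (hI : IsIndependent F) (hU : IsUnanimous F)
    (hpq : p ≠ q) (h : Win F p q C) (hrq : r ≠ q) : Win F r q C := by
  rcases eq_or_ne r p with rfl | hrp
  · exact h
  · exact win_left_of_subset hF hI hU hpq hrp hrq h subset_rfl

theorem win_mono (hF : PreservesDefeatGraphs F) (hI : IsIndependent F) (hU : IsUnanimous F)
    (hA : ∀ p q : A, ∃ r, r ≠ p ∧ r ≠ q) (hpq : p ≠ q) (h : Win F p q C) (hCC' : C ⊆ C') :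
    Win F p q C' := by
  obtain ⟨r, hrp, hrq⟩ := hA p q
  exact win_right hF hI hU hrp.symm (win_right_of_subset hF hI hU hpq hrp hrq h hCC') hpq.symm

/-- Field expansion, as in Arrow's theorem. -/
theorem isDecisive_of_win (hF : PreservesDefeatGraphs F) (hI : IsIndependent F)
    (hU : IsUnanimous F) (hA : ∀ p q : A, ∃ r, r ≠ p ∧ r ≠ q) (hpq : p ≠ q) (h : Win F p q C) :
    IsDecisive F C := by
  intro x y hxy
  obtain ⟨r, hrp, hrx⟩ := hA p x
  have hpr : Win F p r C := win_right hF hI hU hpq h hrp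
  have hxr : Win F x r C := win_left hF hI hU hrp.symm hpr hrx.symm
  exact win_right hF hI hU hrx.symm hxr hxy.symm

theorem isDecisive_iff_win (hF : PreservesDefeatGraphs F) (hI : IsIndependent F)
    (hU : IsUnanimous F) (hA : ∀ p q : A, ∃ r, r ≠ p ∧ r ≠ q) (hpq : p ≠ q) :
    IsDecisive F C ↔ Win F p q C :=
  ⟨fun h => h p q hpq, isDecisive_of_win hF hI hU hA hpq⟩

theorem not_isDecisive_compl_iff (hF : PreservesDefeatGraphs F) (hI : IsIndependent F)
    (hU : IsUnanimous F) (hA : ∀ p q : A, ∃ r, r ≠ p ∧ r ≠ q) (hpq : p ≠ q) :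
    ¬ IsDecisive F Cᶜ ↔ IsDecisive F C := by
  rw [isDecisive_iff_win hF hI hU hA hpq.symm, isDecisive_iff_win hF hI hU hA hpq,
    ← not_win_iff hF hI hpq, not_not]

theorem isDecisive_inter (hF : PreservesDefeatGraphs F) (hI : IsIndependent F)
    (hU : IsUnanimous F) (hA : ∀ p q : A, ∃ r, r ≠ p ∧ r ≠ q) (hpq : p ≠ q) {C₁ C₂ : Set (Fin n)}
    (h₁ : IsDecisive F C₁) (h₂ : IsDecisive F C₂) : IsDecisive F (C₁ ∩ C₂) := by
  obtain ⟨r, hrp, hrq⟩ := hA p q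
  exact isDecisive_of_win hF hI hU hA hrp.symm <| win_trans hF hI hpq hrp hrq subset_rfl
    (Set.inter_subset_left.trans Set.subset_union_left) (h₁ p q hpq) (h₂ q r hrq.symm)

def decisiveUltrafilter (hF : PreservesDefeatGraphs F) (hI : IsIndependent F)
    (hU : IsUnanimous F) (hA : ∀ p q : A, ∃ r, r ≠ p ∧ r ≠ q) (hpq : p ≠ q) :
    Ultrafilter (Fin n) :=
  Ultrafilter.ofComplNotMemIff
    { sets := {C | IsDecisive F C}
      univ_sets := fun _ _ huv => hU.win_univ huv
      sets_of_superset := fun hC hCC' u v huv => win_mono hF hI hU hA huv (hC u v huv) hCC'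
      inter_sets := isDecisive_inter hF hI hU hA hpq }
    fun _ => not_isDecisive_compl_iff hF hI hU hA hpq

theorem isDictatorial (hF : PreservesDefeatGraphs F) (hI : IsIndependent F) (hU : IsUnanimous F)
    (hA : ∀ p q : A, ∃ r, r ≠ p ∧ r ≠ q) (hpq : p ≠ q) : IsDictatorial F := by
  obtain ⟨i, hi⟩ := (decisiveUltrafilter hF hI hU hA hpq).eq_pure_of_finite
  have decisive_iff (C : Set (Fin n)) : IsDecisive F C ↔ i ∈ C := by
    rw [← Ultrafilter.mem_pure, ← hi]
    rfl
  refine ⟨i, fun AF hAF => funext₂ fun u v => propext ?_⟩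
  rcases eq_or_ne u v with rfl | huv
  · calc F AF u u ↔ F (fun _ => AF i) u u :=
          hI _ _ hAF (justifiableProfile_const _) u u (Set.ext fun j => hAF.apply_self_iff j i u)
      _ ↔ AF i u u := by rw [hF.apply_const]
  · calc F AF u v ↔ Win F u v {j | AF j u v} := hI.apply_iff_win hAF huv
      _ ↔ IsDecisive F {j | AF j u v} := (isDecisive_iff_win hF hI hU hA huv).symm
      _ ↔ AF i u v := decisive_iff _

end Rule

end ValueBasedArgumentation

open ValueBasedArgumentation

/-- with at least three arguments, any graph aggregation rule restricted
to justifiable profiles that preserves being a defeat graph (with respect to VAFs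
having at least three values) is not independent, not unanimous, or dictatorial. -/
theorem graph_rule_on_justifiable_profiles_not_independent_unanimous_nondictatorial
    (A : Type) (a₁ a₂ a₃ : A) (ha₁₂ : a₁ ≠ a₂) (ha₁₃ : a₁ ≠ a₃) (ha₂₃ : a₂ ≠ a₃)
    (n : ℕ)
    (F : (Fin n → A → A → Prop) → (A → A → Prop))
    (hPreserves : ∀ (V : Type) (v₁ v₂ v₃ : V), v₁ ≠ v₂ → v₁ ≠ v₃ → v₂ ≠ v₃ →
      ∀ (att : A → A → Prop) (val : A → V) (AF : Fin n → A → A → Prop),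
        (∀ i, ∃ P : V → V → Prop, IsAudience P ∧ AF i = defeats att val P) →
        ∃ P : V → V → Prop, IsAudience P ∧ F AF = defeats att val P) :
    ¬ (∀ (AF AF' : Fin n → A → A → Prop),
          JustifiableProfile AF → JustifiableProfile AF' →
          ∀ a b, {i : Fin n | AF i a b} = {i : Fin n | AF' i a b} →
            (F AF a b ↔ F AF' a b)) ∨
    ¬ (∀ AF : Fin n → A → A → Prop, JustifiableProfile AF →
          ∀ a b, (∀ i, AF i a b) → F AF a b) ∨
    (∃ i : Fin n, ∀ AF : Fin n → A → A → Prop, JustifiableProfile AF → F AF = AF i) := by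
  have hA := exists_ne_ne_of_three ha₁₂ ha₁₃ ha₂₃
  by_cases hI : IsIndependent F
  · by_cases hU : IsUnanimous F
    · exact Or.inr (Or.inr (isDictatorial hPreserves hI hU hA ha₁₂))
    · exact Or.inr (Or.inl hU)
  · exact Or.inl hI
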